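/- arXiv:2510.18242 — 7 statements merged into one kernel-verified Lean document; each statement's English description precedes it below -/
import Mathlib

section
/- Let K ≥ 2, d ≥ 1 and γ > 0, and let D, Q be the Kd×Kd matrices defined from γ as below. Then the operator norms satisfy √(1+γ²) ≤ ‖D+Q‖ ≤ ‖D‖ + ‖Q‖ ≤ max{1+2γ, 3γ}, and moreover ‖(D+Q)·(diag(0,1,…,1) ⊗ I_d)‖ ≥ √(1+γ²), where diag(0,1,…,1) is the K×K diagonal matrix with first diagonal entry 0 and all other diagonal entries 1. -/
/-!
Testing `D + Q` on the basis vector `e₂ ⊗ e` gives its second column, which has the entries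
`-1` (from `T_γ`) and `γ` (from `D` when `K = 2`, from `T_γ` otherwise) in two different rows;
`J` fixes that vector, so the same column bounds `‖(D + Q) J‖` from below. For the upper bound,
the Schur test `‖M‖² ≤ (max row sum of |M|) (max column sum of |M|)` is insensitive to `⊗ I_d`;
the absolute row and column sums of `diag(0,…,0,γ)` are at most `γ`, and those of the skew-symmetric
tridiagonal `T_γ` at most `max (1 + γ) (2γ)`, the entries of modulus `1` sitting only in rows and
columns `1` and `2`.
-/

open Matrix Kronecker

noncomputable def opNorm {m n : Type*} [Fintype m] [Fintype n] [DecidableEq n]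
    (M : Matrix m n ℝ) : ℝ :=
  ‖LinearMap.toContinuousLinearMap (Matrix.toEuclideanLin M)‖

open Finset

section OpNorm

variable {m n : Type*} [Fintype m] [Fintype n]

theorem sq_sum_mul_le_sum_abs_mul (w y : n → ℝ) :
    (∑ j, w j * y j) ^ 2 ≤ (∑ j, |w j|) * ∑ j, |w j| * y j ^ 2 :=
  calc (∑ j, w j * y j) ^ 2 ≤ (∑ j, |w j| * |y j|) ^ 2 := by
        rw [← sq_abs]
        gcongr
        exact (abs_sum_le_sum_abs _ _).trans_eq (by simp [abs_mul])
    _ ≤ _ := sum_sq_le_sum_mul_sum_of_sq_le_mul _ (fun j _ => abs_nonneg _)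
        (fun j _ => by positivity) (fun j _ => le_of_eq (by rw [mul_pow, sq_abs (y j)]; ring))

theorem sum_sq_mulVec_le (M : Matrix m n ℝ) (x : n → ℝ) {R C : ℝ} (hR : 0 ≤ R)
    (hrow : ∀ i, ∑ j, |M i j| ≤ R) (hcol : ∀ j, ∑ i, |M i j| ≤ C) :
    ∑ i, (M *ᵥ x) i ^ 2 ≤ R * C * ∑ j, x j ^ 2 :=
  calc ∑ i, (M *ᵥ x) i ^ 2 ≤ ∑ i, R * ∑ j, |M i j| * x j ^ 2 :=
        sum_le_sum fun i _ => (sq_sum_mul_le_sum_abs_mul _ _).trans <|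
          mul_le_mul_of_nonneg_right (hrow i) (by positivity)
    _ = R * ∑ j, (∑ i, |M i j|) * x j ^ 2 := by
        rw [← mul_sum, sum_comm]
        simp_rw [sum_mul]
    _ ≤ R * ∑ j, C * x j ^ 2 := by gcongr with j; exact hcol j
    _ = R * C * ∑ j, x j ^ 2 := by rw [← mul_sum, mul_assoc]

variable [DecidableEq n]

theorem opNorm_add_le (M N : Matrix m n ℝ) : opNorm (M + N) ≤ opNorm M + opNorm N := by
  unfold opNorm
  rw [map_add, map_add]
  exact norm_add_le _ _

theorem norm_mulVec_le_opNorm (M : Matrix m n ℝ) (x : EuclideanSpace ℝ n) :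
    ‖WithLp.toLp 2 (M *ᵥ x)‖ ≤ opNorm M * ‖x‖ :=
  (LinearMap.toContinuousLinearMap (toEuclideanLin M)).le_opNorm x

theorem sqrt_sum_sq_col_le_opNorm (M : Matrix m n ℝ) (j : n) :
    √(∑ i, M i j ^ 2) ≤ opNorm M := by
  simpa [EuclideanSpace.norm_eq, mulVec_single_one] using
    norm_mulVec_le_opNorm M (EuclideanSpace.single j 1)

theorem opNorm_le_sqrt_mul_of_sum_abs_le (M : Matrix m n ℝ) {R C : ℝ} (hR : 0 ≤ R)
    (hrow : ∀ i, ∑ j, |M i j| ≤ R) (hcol : ∀ j, ∑ i, |M i j| ≤ C) :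
    opNorm M ≤ √(R * C) := by
  refine ContinuousLinearMap.opNorm_le_bound _ (Real.sqrt_nonneg _) fun x => ?_
  calc _ ≤ √(R * C * ‖x‖ ^ 2) := by
        refine Real.le_sqrt_of_sq_le ?_
        rw [EuclideanSpace.real_norm_sq_eq, EuclideanSpace.real_norm_sq_eq]
        exact sum_sq_mulVec_le M x hR hrow hcol
    _ = √(R * C) * ‖x‖ := by rw [Real.sqrt_mul' _ (sq_nonneg _), Real.sqrt_sq (norm_nonneg _)]

end OpNorm

section Kronecker

variable {m n p : Type*} [Fintype p] [DecidableEq p]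

theorem sum_abs_kronecker_one_row [Fintype n] (A : Matrix m n ℝ) (u : m × p) :
    ∑ v, |(A ⊗ₖ (1 : Matrix p p ℝ)) u v| = ∑ j, |A u.1 j| := by
  simp [Fintype.sum_prod_type, one_apply, apply_ite (abs : ℝ → ℝ)]

theorem sum_abs_kronecker_one_col [Fintype m] (A : Matrix m n ℝ) (v : n × p) :
    ∑ u, |(A ⊗ₖ (1 : Matrix p p ℝ)) u v| = ∑ i, |A i v.1| := by
  simp [Fintype.sum_prod_type, one_apply, apply_ite (abs : ℝ → ℝ)]

theorem opNorm_kronecker_one_le [Fintype m] [Fintype n] [DecidableEq n] (A : Matrix m n ℝ)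
    {R C : ℝ} (hR : 0 ≤ R) (hrow : ∀ i, ∑ j, |A i j| ≤ R) (hcol : ∀ j, ∑ i, |A i j| ≤ C) :
    opNorm (A ⊗ₖ (1 : Matrix p p ℝ)) ≤ √(R * C) :=
  opNorm_le_sqrt_mul_of_sum_abs_le _ hR
    (fun u => (sum_abs_kronecker_one_row A u).trans_le (hrow u.1))
    (fun v => (sum_abs_kronecker_one_col A v).trans_le (hcol v.1))

theorem sqrt_sq_add_sq_le_opNorm_kronecker_one [Fintype m] [Fintype n] [DecidableEq n]
    [Nonempty p] (A : Matrix m n ℝ) {a b : m} (hab : a ≠ b) (j : n) :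
    √(A a j ^ 2 + A b j ^ 2) ≤ opNorm (A ⊗ₖ (1 : Matrix p p ℝ)) := by
  classical
  obtain ⟨k⟩ := ‹Nonempty p›
  refine le_trans (Real.sqrt_le_sqrt ?_) (sqrt_sum_sq_col_le_opNorm _ (j, k))
  have hpair : ((a, k) : m × p) ≠ (b, k) := by simpa using hab
  calc A a j ^ 2 + A b j ^ 2
      = ∑ u ∈ {(a, k), (b, k)}, (A ⊗ₖ (1 : Matrix p p ℝ)) u (j, k) ^ 2 := by
        simp [sum_pair hpair]
    _ ≤ _ := sum_le_univ_sum_of_nonneg fun _ => sq_nonneg _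

end Kronecker

theorem sum_ite_le_of_subsingleton {ι : Type*} [Fintype ι] {P : ι → Prop} [DecidablePred P]
    (hP : ∀ a b, P a → P b → a = b) {c : ℝ} (hc : 0 ≤ c) : ∑ j, (if P j then c else 0) ≤ c := by
  rw [sum_ite, sum_const_zero, add_zero, sum_const, nsmul_eq_mul]
  refine mul_le_of_le_one_left hc ?_
  exact_mod_cast card_le_one.mpr fun a ha b hb => hP a b (mem_filter.mp ha).2 (mem_filter.mp hb).2

/-- `T_γ`, with indices shifted to start at `0`. -/
def skewTridiag (K : ℕ) (γ : ℝ) : Matrix (Fin K) (Fin K) ℝ := of fun i j =>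
  if (i : ℕ) + 1 = (j : ℕ) then (if (i : ℕ) = 0 then -1 else -γ)
  else if (j : ℕ) + 1 = (i : ℕ) then (if (j : ℕ) = 0 then 1 else γ)
  else 0

def lastDiag (K : ℕ) (γ : ℝ) : Fin K → ℝ := fun i => if (i : ℕ) = K - 1 then γ else 0

section Chain

variable {K : ℕ} {γ : ℝ}

theorem skewTridiag_transpose : (skewTridiag K γ)ᵀ = -skewTridiag K γ := by
  ext i j
  rw [transpose_apply, neg_apply]
  simp only [skewTridiag, of_apply]
  split_ifs <;> first | omega | simp

theorem sum_abs_skewTridiag_le (hγ : 0 ≤ γ) (i : Fin K) :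
    ∑ j, |skewTridiag K γ i j| ≤ max (1 + γ) (2 * γ) := by
  have hentry : ∀ j : Fin K, |skewTridiag K γ i j| ≤
      (if (i : ℕ) + 1 = j then (if (i : ℕ) = 0 then 1 else γ) else 0) +
      (if (j : ℕ) + 1 = i then (if (i : ℕ) = 1 then 1 else γ) else 0) := by
    intro j
    simp only [skewTridiag, of_apply]
    split_ifs <;> first | omega | simp [abs_of_nonneg hγ]
  have hweight : ∀ n k : ℕ, (0 : ℝ) ≤ if n = k then 1 else γ := fun n k => by
    split_ifs <;> simp [hγ]
  calc ∑ j, |skewTridiag K γ i j|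
      ≤ ∑ j : Fin K, ((if (i : ℕ) + 1 = j then (if (i : ℕ) = 0 then 1 else γ) else 0) +
          (if (j : ℕ) + 1 = i then (if (i : ℕ) = 1 then 1 else γ) else 0)) :=
        sum_le_sum fun j _ => hentry j
    _ ≤ (if (i : ℕ) = 0 then 1 else γ) + (if (i : ℕ) = 1 then 1 else γ) := by
        rw [sum_add_distrib]
        refine add_le_add (sum_ite_le_of_subsingleton (fun a b ha hb => ?_) (hweight _ _))
          (sum_ite_le_of_subsingleton (fun a b ha hb => ?_) (hweight _ _)) <;> omega
    _ ≤ max (1 + γ) (2 * γ) := by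
        split_ifs with h0 h1 h1
        · omega
        · exact le_max_left _ _
        · rw [add_comm]; exact le_max_left _ _
        · rw [← two_mul]; exact le_max_right _ _

theorem sum_abs_skewTridiag_col_le (hγ : 0 ≤ γ) (j : Fin K) :
    ∑ i, |skewTridiag K γ i j| ≤ max (1 + γ) (2 * γ) := by
  have habs : ∀ i, |skewTridiag K γ i j| = |skewTridiag K γ j i| := fun i => by
    rw [← transpose_apply (skewTridiag K γ) j i, skewTridiag_transpose, neg_apply, abs_neg]
  simpa only [habs] using sum_abs_skewTridiag_le hγ j

theorem opNorm_skewTridiag_kronecker_one_le {p : Type*} [Fintype p] [DecidableEq p]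
    (hγ : 0 ≤ γ) : opNorm (skewTridiag K γ ⊗ₖ (1 : Matrix p p ℝ)) ≤ max (1 + γ) (2 * γ) := by
  have hr : 0 ≤ max (1 + γ) (2 * γ) := le_max_of_le_right (by positivity)
  exact (opNorm_kronecker_one_le _ hr (sum_abs_skewTridiag_le hγ)
    (sum_abs_skewTridiag_col_le hγ)).trans_eq (Real.sqrt_mul_self hr)

theorem opNorm_diagonal_lastDiag_kronecker_one_le {p : Type*} [Fintype p] [DecidableEq p]
    (hγ : 0 ≤ γ) : opNorm (diagonal (lastDiag K γ) ⊗ₖ (1 : Matrix p p ℝ)) ≤ γ := by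
  have hentry : ∀ i, |lastDiag K γ i| ≤ γ := fun i => by
    unfold lastDiag; split_ifs <;> simp [abs_of_nonneg hγ, hγ]
  refine (opNorm_kronecker_one_le (diagonal (lastDiag K γ)) hγ (fun i => ?_)
    (fun j => ?_)).trans_eq (Real.sqrt_mul_self hγ)
  · simpa [diagonal_apply, apply_ite (abs : ℝ → ℝ)] using hentry i
  · simpa [diagonal_apply, apply_ite (abs : ℝ → ℝ)] using hentry j

theorem exists_col_one_entries (hK : 2 ≤ K) :
    ∃ a b : Fin K, a ≠ b ∧ (diagonal (lastDiag K γ) + skewTridiag K γ) a ⟨1, hK⟩ = -1 ∧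
      (diagonal (lastDiag K γ) + skewTridiag K γ) b ⟨1, hK⟩ = γ := by
  rcases hK.eq_or_lt with rfl | hK3
  · exact ⟨0, 1, by decide, by simp [skewTridiag], by simp [lastDiag, skewTridiag]⟩
  · refine ⟨⟨0, by omega⟩, ⟨2, hK3⟩, by simp, ?_, ?_⟩ <;> simp [skewTridiag]

end Chain

theorem stmt0 (K d : ℕ) (hK : 2 ≤ K) (hd : 1 ≤ d) (γ : ℝ) (hγ : 0 < γ)
    (Tγ : Matrix (Fin K) (Fin K) ℝ)
    (hT : ∀ i j : Fin K,
      Tγ i j =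
        if (i : ℕ) + 1 = (j : ℕ) then (if (i : ℕ) = 0 then -1 else -γ)
        else if (j : ℕ) + 1 = (i : ℕ) then (if (j : ℕ) = 0 then 1 else γ)
        else 0)
    (D Q J : Matrix (Fin K × Fin d) (Fin K × Fin d) ℝ)
    (hD : D = (Matrix.diagonal fun i : Fin K => if (i : ℕ) = K - 1 then γ else 0) ⊗ₖ
        (1 : Matrix (Fin d) (Fin d) ℝ))
    (hQ : Q = Tγ ⊗ₖ (1 : Matrix (Fin d) (Fin d) ℝ))
    (hJ : J = (Matrix.diagonal fun i : Fin K => if (i : ℕ) = 0 then (0 : ℝ) else 1) ⊗ₖ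
        (1 : Matrix (Fin d) (Fin d) ℝ)) :
    Real.sqrt (1 + γ ^ 2) ≤ opNorm (D + Q) ∧
    opNorm (D + Q) ≤ opNorm D + opNorm Q ∧
    opNorm D + opNorm Q ≤ max (1 + 2 * γ) (3 * γ) ∧
    Real.sqrt (1 + γ ^ 2) ≤ opNorm ((D + Q) * J) := by
  obtain rfl : Tγ = skewTridiag K γ := Matrix.ext hT
  have : Nonempty (Fin d) := Fin.pos_iff_nonempty.mp hd
  obtain ⟨a, b, hab, ha, hb⟩ := exists_col_one_entries (γ := γ) hK
  set A := diagonal (lastDiag K γ) + skewTridiag K γ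
  have hDQ : D + Q = A ⊗ₖ (1 : Matrix (Fin d) (Fin d) ℝ) := by rw [hD, hQ, add_kronecker]; rfl
  have hcol : √(1 + γ ^ 2) = √(A a ⟨1, hK⟩ ^ 2 + A b ⟨1, hK⟩ ^ 2) := by rw [ha, hb, neg_one_sq]
  refine ⟨?_, opNorm_add_le D Q, ?_, ?_⟩
  · rw [hcol, hDQ]
    exact sqrt_sq_add_sq_le_opNorm_kronecker_one A hab _
  · calc opNorm D + opNorm Q ≤ γ + max (1 + γ) (2 * γ) := by
          rw [hD, hQ]
          exact add_le_add (opNorm_diagonal_lastDiag_kronecker_one_le hγ.le)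
            (opNorm_skewTridiag_kronecker_one_le hγ.le)
      _ = max (1 + 2 * γ) (3 * γ) := by rw [← max_add_add_left]; ring_nf
  · rw [hDQ, hJ, ← mul_kronecker_mul, one_mul, hcol]
    simpa [mul_diagonal] using sqrt_sq_add_sq_le_opNorm_kronecker_one
      (p := Fin d) (A * diagonal fun i : Fin K => if (i : ℕ) = 0 then (0 : ℝ) else 1) hab ⟨1, hK⟩
end

section
/- Let U : ℝ^d → ℝ be twice continuously differentiable and m-strongly convex with m > 0, let x⋆ be its unique global minimizer, and let π_U be the probability measure on ℝ^d with density proportional to exp(−U(x)). Then ∫_{ℝ^d} ‖x − x⋆‖² dπ_U(x) ≤ d/m. -/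
/-!
Write `W u = U (x⋆ + u)`. Strong convexity and `∇U(x⋆) = 0` give
`W (l • u) ≥ W u + m ‖u‖² (l² - 1) / 2` for `l ≥ 1`, hence, since `e^{-A} - e^{-B} ≥ (B - A) e^{-B}`,
`m (l - 1) ‖u‖² e^{-W (l • u)} ≤ e^{-W u} - e^{-W (l • u)}`. Integrating and substituting `v = l • u`
gives `m (l - 1) l^{-d-2} ∫ ‖u‖² e^{-W} ≤ (1 - l^{-d}) ∫ e^{-W}`; dividing by `l - 1` and letting
`l → 1⁺` yields `m ∫ ‖u‖² e^{-W} ≤ d ∫ e^{-W}`, which is the claim after normalising by `Z`.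
-/

open MeasureTheory Module

lemma mul_exp_neg_le_exp_neg_sub_exp_neg {s A B : ℝ} (h : A + s ≤ B) :
    s * Real.exp (-B) ≤ Real.exp (-A) - Real.exp (-B) := by
  have hsplit : Real.exp (-A) = Real.exp (-B) * Real.exp (B - A) := by
    rw [← Real.exp_add]; ring_nf
  have := mul_le_mul_of_nonneg_left (Real.add_one_le_exp (B - A)) (Real.exp_pos (-B)).le
  nlinarith [Real.exp_pos (-B)]

lemma monotoneOn_sub_mul_sq_of_le_deriv_deriv {f f' f'' : ℝ → ℝ} {c : ℝ}
    (hf : ∀ t, HasDerivAt f (f' t) t) (hf' : ∀ t, HasDerivAt f' (f'' t) t)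
    (hc : ∀ t, c ≤ f'' t) (h0 : f' 0 = 0) :
    MonotoneOn (fun t => f t - c * t ^ 2 / 2) (Set.Ici 0) := by
  have hsq : ∀ t, HasDerivAt (fun t => c * t ^ 2 / 2) (c * t) t := fun t => by
    refine (((hasDerivAt_pow 2 t).const_mul c).div_const 2).congr_deriv ?_
    push_cast; ring
  have hslope : Monotone (fun t => f' t - c * t) :=
    monotone_of_hasDerivAt_nonneg (fun t => (hf' t).sub ((hasDerivAt_id t).const_mul c))
      fun t => by simpa using hc t
  have hg : ∀ t, HasDerivAt (fun t => f t - c * t ^ 2 / 2) (f' t - c * t) t :=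
    fun t => (hf t).sub (hsq t)
  refine monotoneOn_of_hasDerivWithinAt_nonneg (convex_Ici 0)
    (fun t _ => (hg t).continuousAt.continuousWithinAt) (fun t _ => (hg t).hasDerivWithinAt)
    fun t ht => ?_
  rw [interior_Ici] at ht
  simpa [h0] using hslope (le_of_lt ht)

lemma ContDiff.quadratic_growth_along_ray {E : Type*} [NormedAddCommGroup E] [NormedSpace ℝ E]
    {U : E → ℝ} (hU : ContDiff ℝ 2 U) {m : ℝ}
    (hconv : ∀ x v, m * ‖v‖ ^ 2 ≤ iteratedFDeriv ℝ 2 U x ![v, v])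
    {x : E} (hx : fderiv ℝ U x = 0) (u : E) {a b : ℝ} (ha : 0 ≤ a) (hab : a ≤ b) :
    U (x + a • u) + m * ‖u‖ ^ 2 * (b ^ 2 - a ^ 2) / 2 ≤ U (x + b • u) := by
  have hline : ∀ t : ℝ, HasDerivAt (fun t : ℝ => x + t • u) u t := fun t => by
    simpa using ((hasDerivAt_id t).smul_const u).const_add x
  have hdU : ∀ t : ℝ, HasDerivAt (fun t => U (x + t • u)) (fderiv ℝ U (x + t • u) u) t :=
    fun t => ((hU.differentiable two_ne_zero) _).hasFDerivAt.comp_hasDerivAt t (hline t)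
  have hd2U : ∀ t : ℝ, HasDerivAt (fun t => fderiv ℝ U (x + t • u) u)
      (iteratedFDeriv ℝ 2 U (x + t • u) ![u, u]) t := fun t => by
    have hD : Differentiable ℝ (fderiv ℝ U) :=
      (hU.fderiv_right (m := 1) le_rfl).differentiable one_ne_zero
    rw [iteratedFDeriv_two_apply]
    simpa using ((hD _).hasFDerivAt.comp_hasDerivAt t (hline t)).clm_apply (hasDerivAt_const t u)
  have := monotoneOn_sub_mul_sq_of_le_deriv_deriv hdU hd2U (fun t => hconv (x + t • u) u)
    (by simp [hx]) ha (ha.trans hab) hab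
  simp only at this
  linarith

lemma integrable_exp_neg_of_add_mul_sq_norm_le {V : Type*} [NormedAddCommGroup V]
    [InnerProductSpace ℝ V] [FiniteDimensional ℝ V] [MeasurableSpace V] [BorelSpace V]
    {W : V → ℝ} (hW : Measurable W) {a b : ℝ} (hb : 0 < b) (hab : ∀ u, a + b * ‖u‖ ^ 2 ≤ W u) :
    Integrable fun u => Real.exp (-W u) := by
  have hgauss : Integrable fun u : V => Real.exp (-b * ‖u‖ ^ 2) := by
    refine (GaussianFourier.integrable_cexp_neg_mul_sq_norm_add (V := V) (b := b)
      (by simpa using hb) 0 0).norm.congr (ae_of_all _ fun u => ?_)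
    simp only [Complex.norm_exp, zero_mul, add_zero]
    norm_cast
  refine (hgauss.const_mul (Real.exp (-a))).mono' (by fun_prop) (ae_of_all _ fun u => ?_)
  rw [Real.norm_of_nonneg (Real.exp_pos _).le, ← Real.exp_add]
  exact Real.exp_le_exp.2 (by linarith [hab u])

lemma integral_withDensity_ofReal {α E : Type*} [MeasurableSpace α] [NormedAddCommGroup E]
    [NormedSpace ℝ E] {μ : Measure α} {g : α → ℝ} (hg : AEMeasurable g μ) (hg0 : 0 ≤ᵐ[μ] g)
    (f : α → E) : ∫ x, f x ∂μ.withDensity (fun x => ENNReal.ofReal (g x)) = ∫ x, g x • f x ∂μ := by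
  rw [integral_withDensity_eq_integral_toReal_smul₀ hg.ennreal_ofReal
    (ae_of_all _ fun _ => ENNReal.ofReal_lt_top)]
  exact integral_congr_ae (hg0.mono fun x hx => by simp [ENNReal.toReal_ofReal hx])

lemma le_natCast_mul_of_forall_one_lt {a b : ℝ} {d : ℕ}
    (h : ∀ l : ℝ, 1 < l → a * (l - 1) ≤ l ^ 2 * (l ^ d - 1) * b) : a ≤ d * b := by
  have hgeom : ∀ l : ℝ, 1 < l → a ≤ l ^ 2 * (∑ i ∈ Finset.range d, l ^ i) * b := by
    intro l hl
    have := h l hl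
    rw [← geom_sum_mul] at this
    nlinarith
  have hlim : Filter.Tendsto (fun l : ℝ => l ^ 2 * (∑ i ∈ Finset.range d, l ^ i) * b)
      (nhdsWithin 1 (Set.Ioi 1)) (nhds (1 ^ 2 * (∑ i ∈ Finset.range d, (1 : ℝ) ^ i) * b)) :=
    ((Continuous.tendsto (by fun_prop) 1).mono_left nhdsWithin_le_nhds)
  simpa using ge_of_tendsto hlim (eventually_nhdsWithin_of_forall hgeom)

section Scaling

variable {E : Type*} [NormedAddCommGroup E] [NormedSpace ℝ E] [FiniteDimensional ℝ E]
  [MeasurableSpace E] [BorelSpace E] (μ : Measure E) [μ.IsAddHaarMeasure]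
  {W : E → ℝ} {m : ℝ}

lemma mul_integral_sq_norm_mul_exp_neg_mul_sub_one_le (hW : Measurable W) (hm : 0 ≤ m)
    (hgrowth : ∀ u (l : ℝ), 1 < l → W u + m * ‖u‖ ^ 2 * (l ^ 2 - 1) / 2 ≤ W (l • u))
    (hint : Integrable (fun u => Real.exp (-W u)) μ) {l : ℝ} (hl : 1 < l) :
    m * (∫ u, ‖u‖ ^ 2 * Real.exp (-W u) ∂μ) * (l - 1) ≤
      l ^ 2 * (l ^ finrank ℝ E - 1) * ∫ u, Real.exp (-W u) ∂μ := by
  have hl0 : 0 < l := by linarith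
  have hpoint : ∀ u, m * (l - 1) * (‖u‖ ^ 2 * Real.exp (-W (l • u))) ≤
      Real.exp (-W u) - Real.exp (-W (l • u)) := fun u => by
    rw [← mul_assoc]
    refine mul_exp_neg_le_exp_neg_sub_exp_neg (le_trans ?_ (hgrowth u l hl))
    nlinarith [mul_nonneg (mul_nonneg hm (sq_nonneg ‖u‖)) (sq_nonneg (l - 1))]
  have hint_l : Integrable (fun u => Real.exp (-W (l • u))) μ :=
    (integrable_comp_smul_iff μ (fun v => Real.exp (-W v)) hl0.ne').2 hint
  have hint_lhs : Integrable (fun u => m * (l - 1) * (‖u‖ ^ 2 * Real.exp (-W (l • u)))) μ :=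
    (hint.sub hint_l).mono' (by fun_prop) (ae_of_all _ fun u => by
      rw [Real.norm_of_nonneg (by have := hl.le; positivity)]
      exact hpoint u)
  have hscale_sq : ∫ u, ‖u‖ ^ 2 * Real.exp (-W (l • u)) ∂μ =
      (l ^ 2)⁻¹ * ((l ^ finrank ℝ E)⁻¹ * ∫ u, ‖u‖ ^ 2 * Real.exp (-W u) ∂μ) := by
    rw [← smul_eq_mul _ (∫ u, _ ∂μ), ← Measure.integral_comp_smul_of_nonneg μ _ l (hR := hl0.le),
      ← integral_const_mul]
    congr 1 with u
    rw [norm_smul, Real.norm_of_nonneg hl0.le]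
    field_simp
  have hscale : ∫ u, Real.exp (-W (l • u)) ∂μ = (l ^ finrank ℝ E)⁻¹ * ∫ u, Real.exp (-W u) ∂μ :=
    Measure.integral_comp_smul_of_nonneg μ (fun v => Real.exp (-W v)) l (hR := hl0.le)
  have := integral_mono (g := fun u => Real.exp (-W u) - Real.exp (-W (l • u)))
    hint_lhs (hint.sub hint_l) hpoint
  rw [integral_const_mul, integral_sub hint hint_l, hscale_sq, hscale] at this
  have hpow : 0 < l ^ 2 * l ^ finrank ℝ E := by positivity
  have := mul_le_mul_of_nonneg_right this hpow.le
  field_simp at this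
  linear_combination this

theorem mul_integral_sq_norm_mul_exp_neg_le (hW : Measurable W) (hm : 0 ≤ m)
    (hgrowth : ∀ u (l : ℝ), 1 < l → W u + m * ‖u‖ ^ 2 * (l ^ 2 - 1) / 2 ≤ W (l • u))
    (hint : Integrable (fun u => Real.exp (-W u)) μ) :
    m * ∫ u, ‖u‖ ^ 2 * Real.exp (-W u) ∂μ ≤ finrank ℝ E * ∫ u, Real.exp (-W u) ∂μ :=
  le_natCast_mul_of_forall_one_lt fun _ hl =>
    mul_integral_sq_norm_mul_exp_neg_mul_sub_one_le μ hW hm hgrowth hint hl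

end Scaling

theorem stmt3_general (d : ℕ) (m : ℝ) (hm : 0 < m)
    (U : EuclideanSpace ℝ (Fin d) → ℝ) (hU : ContDiff ℝ 2 U)
    -- `m`-strong convexity: `∇²U(x) ⪰ m I` for all `x`
    (hconv : ∀ x v, m * ‖v‖ ^ 2 ≤ iteratedFDeriv ℝ 2 U x ![v, v])
    -- `xstar` is the unique global minimizer of `U`
    (xstar : EuclideanSpace ℝ (Fin d))
    (hmin : ∀ z, U xstar ≤ U z)
    -- `π` is the probability measure with density proportional to `exp (-U)`
    (Z : ℝ) (hZ : Z = ∫ x, Real.exp (-U x))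
    (π : Measure (EuclideanSpace ℝ (Fin d)))
    (hπ : π = volume.withDensity fun x => ENNReal.ofReal (Real.exp (-U x) / Z)) :
    ∫ x, ‖x - xstar‖ ^ 2 ∂π ≤ d / m := by
  have hUm : Measurable U := hU.continuous.measurable
  have hcrit : fderiv ℝ U xstar = 0 := IsLocalMin.fderiv_eq_zero (.of_forall hmin)
  have hgrowth (u : EuclideanSpace ℝ (Fin d)) {a b : ℝ} (ha : 0 ≤ a) (hab : a ≤ b) :=
    hU.quadratic_growth_along_ray hconv hcrit u ha hab
  have hint : Integrable fun u => Real.exp (-U (xstar + u)) :=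
    integrable_exp_neg_of_add_mul_sq_norm_le (by fun_prop) (half_pos hm) fun u => by
      simpa [mul_div_right_comm] using hgrowth u le_rfl zero_le_one
  have hZ_shift : ∫ u, Real.exp (-U (xstar + u)) = Z :=
    hZ ▸ integral_add_left_eq_self (fun x => Real.exp (-U x)) xstar
  have hZpos : 0 < Z := hZ_shift ▸ integral_exp_pos hint
  have hmoment := mul_integral_sq_norm_mul_exp_neg_le volume (by fun_prop) hm.le
    (fun u l hl => by simpa using hgrowth u zero_le_one hl.le) hint
  rw [finrank_euclideanSpace_fin, hZ_shift] at hmoment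
  have hJ_shift : ∫ x, Real.exp (-U x) / Z * ‖x - xstar‖ ^ 2 =
      Z⁻¹ * ∫ u, ‖u‖ ^ 2 * Real.exp (-U (xstar + u)) := by
    rw [← integral_const_mul, ← integral_add_left_eq_self _ xstar]
    simp only [add_sub_cancel_left]
    congr 1 with u
    ring
  rw [hπ, integral_withDensity_ofReal (by fun_prop) (ae_of_all _ fun x => by positivity)]
  simp only [smul_eq_mul]
  rw [hJ_shift, inv_mul_eq_div, div_le_div_iff₀ hZpos hm]
  linarith

theorem stmt3 (d : ℕ) (hd : 1 ≤ d) (m : ℝ) (hm : 0 < m)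
    (U : EuclideanSpace ℝ (Fin d) → ℝ) (hU : ContDiff ℝ 2 U)
    -- `m`-strong convexity: `∇²U(x) ⪰ m I` for all `x`
    (hconv : ∀ x v, m * ‖v‖ ^ 2 ≤ iteratedFDeriv ℝ 2 U x ![v, v])
    -- `xstar` is the unique global minimizer of `U`
    (xstar : EuclideanSpace ℝ (Fin d))
    (hmin : ∀ z, U xstar ≤ U z)
    (huniq : ∀ z, (∀ y, U z ≤ U y) → z = xstar)
    -- `π` is the probability measure with density proportional to `exp (-U)`
    (Z : ℝ) (hZ : Z = ∫ x, Real.exp (-U x))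
    (π : Measure (EuclideanSpace ℝ (Fin d)))
    (hπ : π = volume.withDensity fun x => ENNReal.ofReal (Real.exp (-U x) / Z)) :
    ∫ x, ‖x - xstar‖ ^ 2 ∂π ≤ d / m :=
  stmt3_general d m hm U hU hconv xstar hmin Z hZ π hπ
end

section
/- Let n ≥ 1 and let T ∈ ℝ^{n×n} be the matrix with entries T_{i,i+1} = −1 and T_{i+1,i} = 1 for 1 ≤ i ≤ n−1, T_{n,n} = 1, and all other entries 0. If λ ∈ ℂ and x ∈ ℂ^n, x ≠ 0, satisfy T x = λ x, then the last coordinate x_n is nonzero and Re(λ) = |x_n|²/‖x‖². In particular every eigenvalue of T has strictly positive real part. -/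
/-!
Write `T = S + eₙ eₙᵀ` with `S` skew-symmetric, so that `T + Tᴴ = 2 eₙ eₙᵀ`. For an eigenpair
`T x = λ x` this gives `2 Re λ ‖x‖² = x* (T + Tᴴ) x = 2 |xₙ|²`. Since `T` is tridiagonal with
nonzero subdiagonal, row `i + 1` of `(T - λ) x = 0` expresses `xᵢ` through `xᵢ₊₁, …, xₙ`;
hence `xₙ = 0` would force `x = 0`, and so `Re λ > 0`.
-/

open Matrix

namespace Matrix

theorem eq_zero_of_mulVec_eq_zero_of_subdiag_ne_zero {R : Type*} [NonUnitalNonAssocSemiring R]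
    [NoZeroDivisors R]
    {n : ℕ} (B : Matrix (Fin n) (Fin n) R)
    (hsub : ∀ i j : Fin n, (j : ℕ) + 1 = i → B i j ≠ 0)
    (hlow : ∀ i j : Fin n, (j : ℕ) + 1 < i → B i j = 0)
    {x : Fin n → R} (hBx : B *ᵥ x = 0) (hlast : ∀ i : Fin n, (i : ℕ) + 1 = n → x i = 0) :
    x = 0 := by
  funext i
  induction i using WellFoundedGT.induction with
  | _ i ih =>
    by_cases hi : (i : ℕ) + 1 = n
    · exact hlast i hi
    set i' : Fin n := ⟨i + 1, by omega⟩
    have hrow : B i' i * x i = 0 := by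
      have hrow := congrFun hBx i'
      rwa [mulVec, dotProduct, Fintype.sum_eq_single i] at hrow
      intro j hj
      rcases lt_or_gt_of_ne hj with hlt | hgt
      · rw [hlow i' j (by simp [i']; omega), zero_mul]
      · rw [ih j hgt, Pi.zero_apply, mul_zero]
    exact (mul_eq_zero.mp hrow).resolve_left (hsub i' i rfl)

theorem star_dotProduct_add_conjTranspose_mulVec {R ι : Type*} [CommSemiring R] [StarRing R]
    [Fintype ι] {A : Matrix ι ι R} {x : ι → R} {lam : R} (h : A *ᵥ x = lam • x) :
    star x ⬝ᵥ (A + Aᴴ) *ᵥ x = (lam + star lam) * (star x ⬝ᵥ x) := by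
  have hA : star x ⬝ᵥ A *ᵥ x = lam * (star x ⬝ᵥ x) := by rw [h, dotProduct_smul, smul_eq_mul]
  have hAH : star x ⬝ᵥ Aᴴ *ᵥ x = star (star x ⬝ᵥ A *ᵥ x) := by
    rw [mulVec_conjTranspose, star_dotProduct_star, dotProduct_mulVec]
  rw [add_mulVec, dotProduct_add, hAH, hA, star_mul', ← star_dotProduct, add_mul]

end Matrix

theorem Complex.star_dotProduct_self {ι : Type*} [Fintype ι] (x : ι → ℂ) :
    star x ⬝ᵥ x = ((∑ i, ‖x i‖ ^ 2 : ℝ) : ℂ) := by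
  simp [dotProduct, Complex.conj_mul']

def cornerTridiag (n : ℕ) : Matrix (Fin n) (Fin n) ℂ :=
  of fun i j =>
    if (i : ℕ) + 1 = j then -1
    else if (j : ℕ) + 1 = i then 1
    else if (i : ℕ) = n - 1 ∧ (j : ℕ) = n - 1 then 1
    else 0

theorem cornerTridiag_add_conjTranspose {n : ℕ} {m : Fin n} (hm : (m : ℕ) = n - 1) :
    cornerTridiag n + (cornerTridiag n)ᴴ = single m m 2 := by
  ext i j
  simp only [cornerTridiag, Matrix.add_apply, conjTranspose_apply, of_apply, single_apply,
    Fin.ext_iff, apply_ite star, star_neg, star_one, star_zero]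
  split_ifs <;> first | omega | norm_num

theorem ne_zero_of_cornerTridiag_mulVec_eq_smul {n : ℕ} {lam : ℂ} {x : Fin n → ℂ} (hx : x ≠ 0)
    (h : cornerTridiag n *ᵥ x = lam • x) {m : Fin n} (hm : (m : ℕ) = n - 1) : x m ≠ 0 := by
  intro hxm
  have hker : (cornerTridiag n - lam • 1) *ᵥ x = 0 := by
    rw [sub_mulVec, smul_mulVec, one_mulVec, h, sub_self]
  have hlast : ∀ i : Fin n, (i : ℕ) + 1 = n → x i = 0 := fun i hi ↦ by
    rwa [(Fin.ext (by omega) : i = m)]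
  refine hx (eq_zero_of_mulVec_eq_zero_of_subdiag_ne_zero _ ?_ ?_ hker hlast) <;>
  · intro i j hij
    simp only [cornerTridiag, Matrix.sub_apply, Matrix.smul_apply, of_apply, one_apply,
      Fin.ext_iff, smul_eq_mul]
    split_ifs <;> first | omega | norm_num

theorem re_mul_sum_normSq_of_cornerTridiag_mulVec_eq_smul {n : ℕ} {lam : ℂ} {x : Fin n → ℂ}
    (h : cornerTridiag n *ᵥ x = lam • x) {m : Fin n} (hm : (m : ℕ) = n - 1) :
    lam.re * ∑ i, ‖x i‖ ^ 2 = ‖x m‖ ^ 2 := by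
  have key := star_dotProduct_add_conjTranspose_mulVec h
  rw [cornerTridiag_add_conjTranspose hm, Complex.star_dotProduct_self, single_mulVec_eq,
    dotProduct_smul, dotProduct_single, smul_eq_mul, mul_one, Pi.star_apply, mul_assoc,
    Complex.star_def, Complex.mul_conj', Complex.add_conj] at key
  have key : 2 * ‖x m‖ ^ 2 = 2 * lam.re * ∑ i, ‖x i‖ ^ 2 := by exact_mod_cast key
  linarith

theorem stmt6 (n : ℕ) (hn : 1 ≤ n)
    (T : Matrix (Fin n) (Fin n) ℂ)
    (hT : ∀ i j : Fin n, T i j =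
      if (i : ℕ) + 1 = (j : ℕ) then -1
      else if (j : ℕ) + 1 = (i : ℕ) then 1
      else if (i : ℕ) = n - 1 ∧ (j : ℕ) = n - 1 then 1
      else 0)
    (lam : ℂ) (x : Fin n → ℂ) (hx : x ≠ 0)
    (heig : T.mulVec x = lam • x) :
    x ⟨n - 1, by omega⟩ ≠ 0 ∧
    lam.re = ‖x ⟨n - 1, by omega⟩‖ ^ 2 / ∑ i, ‖x i‖ ^ 2 ∧
    0 < lam.re := by
  obtain rfl : T = cornerTridiag n := ext hT
  set m : Fin n := ⟨n - 1, by omega⟩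
  have hlast : x m ≠ 0 := ne_zero_of_cornerTridiag_mulVec_eq_smul hx heig rfl
  have hsum : 0 < ∑ i, ‖x i‖ ^ 2 :=
    Finset.sum_pos' (fun i _ => by positivity) ⟨m, Finset.mem_univ m, by positivity⟩
  have hre : lam.re = ‖x m‖ ^ 2 / ∑ i, ‖x i‖ ^ 2 := by
    rw [eq_div_iff hsum.ne', re_mul_sum_normSq_of_cornerTridiag_mulVec_eq_smul heig (m := m) rfl]
  exact ⟨hlast, hre, hre ▸ div_pos (by positivity) hsum⟩
end

section
/- Let K ≥ 2, d ≥ 1, γ > 0, and let D, Q be the Kd×Kd matrices defined from γ as below; set J := diag(0,1,…,1) ⊗ I_d and A := −(D+Q)·J, and let e_2 ∈ ℝ^K be the second standard basis vector. Let U : ℝ^d → ℝ be differentiable with ∇U L-Lipschitz, L > 0. Fix M ≥ 1 nodes 0 ≤ c_1 < ⋯ < c_M ≤ 1 with Lagrange basis polynomials ℓ_1,…,ℓ_M and Lebesgue constant Γ_φ := sup_{τ∈[0,1]} ∑_{j=1}^M |ℓ_j(τ)|. Fix h > 0, y ∈ ℝ^{Kd} and a continuous W : [0,h] → ℝ^{Kd},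 and for a continuous path X : [0,h] → ℝ^{Kd} with first d-dimensional block X_1 define P(s; X) := ∑_{j=1}^M ℓ_j(s/h)·∇U(X_1(c_j h)) for s ∈ [0,h]. Suppose X̃, Ỹ : [0,h] → ℝ^{Kd} are continuous and satisfy X̃(t) = y + ∫_0^t A X̃(s) ds − ∫_0^t (e_2 ⊗ I_d)·P(s; X) ds + W(t) and Ỹ(t) = y + ∫_0^t A Ỹ(s) ds − ∫_0^t (e_2 ⊗ I_d)·P(s; Y) ds + W(t) for all t ∈ [0,h], for continuous paths X, Y. Then sup_{t∈[0,h]} ‖X̃(t) − Ỹ(t)‖ ≤ e^{‖A‖h} · L · Γ_φ · h · sup_{t∈[0,h]} ‖X(t) − Y(t)‖. -/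
open Matrix Kronecker

/-!
The data `y` and `W` cancel in `Z = X̃ - Ỹ`, which solves the linear integral equation
`Z t = ∫₀ᵗ (A Z s + F s) ds`, `F` being the difference of the two embedded interpolated
gradients. The block embedding and the block projection are non-expansive and `∇U` is
`L`-Lipschitz, so `‖F‖ ≤ ε := Γ_φ L sup ‖X - Y‖`; Grönwall's inequality then gives
`‖Z t‖ ≤ ε (e^{‖A‖ t} - 1) / ‖A‖ ≤ e^{‖A‖ h} ε h`.
-/

open Set

lemma gronwallBound_zero_le_exp_mul {K ε x : ℝ} (hK : 0 ≤ K) (hε : 0 ≤ ε) :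
    gronwallBound 0 K ε x ≤ Real.exp (K * x) * ε * x := by
  rcases hK.eq_or_lt with rfl | hK
  · simp [gronwallBound_K0]
  · simp only [gronwallBound_of_K_ne_0 hK.ne', zero_mul, zero_add]
    rw [div_mul_eq_mul_div, div_le_iff₀ hK]
    have hneg := Real.add_one_le_exp (-(K * x))
    have hinv : Real.exp (-(K * x)) * Real.exp (K * x) = 1 := by rw [← Real.exp_add]; simp
    have hexp : Real.exp (K * x) - 1 ≤ K * x * Real.exp (K * x) := by
      nlinarith [Real.exp_pos (K * x)]
    nlinarith [mul_le_mul_of_nonneg_left hexp hε]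

lemma Continuous.le_ciSup_of_isCompact {X : Type*} [TopologicalSpace X] {f : X → ℝ}
    (hf : Continuous f) {s : Set X} (hs : IsCompact s) {x : X} (hx : x ∈ s) :
    f x ≤ ⨆ y : s, f y :=
  have := isCompact_iff_compactSpace.mp hs
  le_ciSup (isCompact_range (hf.comp continuous_subtype_val)).bddAbove ⟨x, hx⟩

lemma norm_sum_smul_sub_sum_smul_le {ι E : Type*} [SeminormedAddCommGroup E] [NormedSpace ℝ E]
    (s : Finset ι) (w : ι → ℝ) (a b : ι → E) {C : ℝ} (hC : ∀ j ∈ s, ‖a j - b j‖ ≤ C) :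
    ‖∑ j ∈ s, w j • a j - ∑ j ∈ s, w j • b j‖ ≤ (∑ j ∈ s, |w j|) * C := by
  rw [← Finset.sum_sub_distrib, Finset.sum_mul]
  refine (norm_sum_le _ _).trans (Finset.sum_le_sum fun j hj => ?_)
  rw [← smul_sub, norm_smul, Real.norm_eq_abs]
  exact mul_le_mul_of_nonneg_left (hC j hj) (abs_nonneg _)

section Blocks

variable {𝕜 ι κ : Type*} [RCLike 𝕜] [Fintype ι] [Fintype κ]

lemma EuclideanSpace.norm_block_le (x : EuclideanSpace 𝕜 (ι × κ)) (i : ι) :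
    ‖(WithLp.toLp 2 fun j => x (i, j) : EuclideanSpace 𝕜 κ)‖ ≤ ‖x‖ := by
  refine (sq_le_sq₀ (norm_nonneg _) (norm_nonneg _)).mp ?_
  rw [EuclideanSpace.norm_sq_eq, EuclideanSpace.norm_sq_eq, Fintype.sum_prod_type]
  exact Finset.single_le_sum (f := fun i => ∑ j, ‖x (i, j)‖ ^ 2)
    (fun _ _ => Finset.sum_nonneg fun _ _ => sq_nonneg _) (Finset.mem_univ i)

variable [DecidableEq ι]

def EuclideanSpace.blockEmbedding (i : ι) :
    EuclideanSpace 𝕜 κ →ₗᵢ[𝕜] EuclideanSpace 𝕜 (ι × κ) where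
  toFun v := WithLp.toLp 2 fun p => if p.1 = i then v p.2 else 0
  map_add' v w := by ext p; by_cases p.1 = i <;> simp [*]
  map_smul' r v := by ext p; by_cases p.1 = i <;> simp [*]
  norm_map' v := by
    refine (sq_eq_sq₀ (norm_nonneg _) (norm_nonneg _)).mp ?_
    rw [EuclideanSpace.norm_sq_eq, EuclideanSpace.norm_sq_eq, Fintype.sum_prod_type]
    simp [apply_ite]

lemma EuclideanSpace.blockEmbedding_apply (i : ι) (v : EuclideanSpace 𝕜 κ) (p : ι × κ) :
    blockEmbedding i v p = if p.1 = i then v p.2 else 0 := rfl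

end Blocks

section LinearForcing

variable {E : Type*} [NormedAddCommGroup E] [NormedSpace ℝ E] [CompleteSpace E]

theorem norm_le_exp_mul_of_eq_integral_add {T : E →L[ℝ] E} {Z F : ℝ → E} {h ε : ℝ}
    (hZ : Continuous Z) (hF : Continuous F)
    (hZ_eq : ∀ t ∈ Icc 0 h, Z t = ∫ s in 0..t, T (Z s) + F s)
    (hF_le : ∀ s ∈ Icc 0 h, ‖F s‖ ≤ ε) :
    ∀ t ∈ Icc 0 h, ‖Z t‖ ≤ Real.exp (‖T‖ * h) * ε * h := by
  intro t ht
  have hh : 0 ≤ h := ht.1.trans ht.2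
  have hε : 0 ≤ ε := (norm_nonneg _).trans (hF_le 0 ⟨le_rfl, hh⟩)
  have hg : Continuous fun s => T (Z s) + F s := by fun_prop
  have hderiv := hg.integral_hasStrictDerivAt 0
  have hgronwall := norm_le_gronwallBound_of_norm_deriv_right_le
    (f := fun t => ∫ s in 0..t, T (Z s) + F s) (a := 0) (b := h) (δ := 0) (K := ‖T‖) (ε := ε)
    (continuous_iff_continuousAt.mpr fun s => (hderiv s).hasDerivAt.continuousAt).continuousOn
    (fun s _ => (hderiv s).hasDerivAt.hasDerivWithinAt) (by simp) fun s hs => by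
      rw [← hZ_eq s ⟨hs.1, hs.2.le⟩]
      exact (norm_add_le _ _).trans (add_le_add (T.le_opNorm _) (hF_le s ⟨hs.1, hs.2.le⟩))
  calc ‖Z t‖ ≤ gronwallBound 0 ‖T‖ ε (t - 0) := hZ_eq t ht ▸ hgronwall t ht
    _ ≤ gronwallBound 0 ‖T‖ ε h :=
      gronwallBound_mono le_rfl hε (norm_nonneg _) (by linarith [ht.2])
    _ ≤ Real.exp (‖T‖ * h) * ε * h := gronwallBound_zero_le_exp_mul (norm_nonneg _) hε

theorem norm_sub_le_of_eq_integral {T : E →L[ℝ] E} {x₀ : E} {u v F G W : ℝ → E} {h ε : ℝ}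
    (hu : Continuous u) (hv : Continuous v) (hF : Continuous F) (hG : Continuous G)
    (hu_eq : ∀ t ∈ Icc 0 h, u t = x₀ + (∫ s in 0..t, T (u s)) - (∫ s in 0..t, F s) + W t)
    (hv_eq : ∀ t ∈ Icc 0 h, v t = x₀ + (∫ s in 0..t, T (v s)) - (∫ s in 0..t, G s) + W t)
    (hFG : ∀ s ∈ Icc 0 h, ‖F s - G s‖ ≤ ε) :
    ∀ t ∈ Icc 0 h, ‖u t - v t‖ ≤ Real.exp (‖T‖ * h) * ε * h := by
  refine norm_le_exp_mul_of_eq_integral_add (F := fun s => G s - F s) (hu.sub hv) (hG.sub hF)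
    (fun t ht => ?_) fun s hs => norm_sub_rev (G s) (F s) ▸ hFG s hs
  have hi {f : ℝ → E} (hf : Continuous f) := hf.intervalIntegrable (μ := MeasureTheory.volume) 0 t
  rw [hu_eq t ht, hv_eq t ht, intervalIntegral.integral_add (hi (by fun_prop)) (hi (by fun_prop)),
    intervalIntegral.integral_sub (hi hG) (hi hF)]
  simp only [map_sub]
  rw [intervalIntegral.integral_sub (hi (by fun_prop)) (hi (by fun_prop))]
  abel

end LinearForcing

theorem stmt10 (K d : ℕ) (hK : 2 ≤ K)
    (A : Matrix (Fin K × Fin d) (Fin K × Fin d) ℝ)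
    -- `e₂ ⊗ I_d` viewed as the embedding of `ℝ^d` into the second block of `ℝ^{Kd}`
    (emb2 : EuclideanSpace ℝ (Fin d) → EuclideanSpace ℝ (Fin K × Fin d))
    (hemb2 : ∀ v p, emb2 v p = if (p.1 : ℕ) = 1 then v p.2 else 0)
    (U : EuclideanSpace ℝ (Fin d) → ℝ)
    (L : ℝ) (hL : 0 < L)
    (hLip : ∀ a b, ‖gradient U a - gradient U b‖ ≤ L * ‖a - b‖)
    -- nodes `0 ≤ c₁ < ⋯ < c_M ≤ 1`
    (M : ℕ) (c : Fin M → ℝ)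
    (hc : ∀ j, c j ∈ Set.Icc (0 : ℝ) 1)
    -- the Lagrange basis polynomials and the Lebesgue constant
    (ℓ : Fin M → ℝ → ℝ)
    (hℓ : ∀ (j : Fin M) (τ : ℝ),
      ℓ j τ = ∏ k ∈ Finset.univ.erase j, (τ - c k) / (c j - c k))
    (Γφ : ℝ) (hΓφ : Γφ = ⨆ τ : Set.Icc (0 : ℝ) 1, ∑ j, |ℓ j (τ : ℝ)|)
    (h : ℝ) (y : EuclideanSpace ℝ (Fin K × Fin d))
    (W : ℝ → EuclideanSpace ℝ (Fin K × Fin d))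
    -- `P s X = ∑ⱼ ℓⱼ(s/h)·∇U(X₁(cⱼ h))`
    (P : ℝ → (ℝ → EuclideanSpace ℝ (Fin K × Fin d)) → EuclideanSpace ℝ (Fin d))
    (hP : ∀ s X, P s X =
      ∑ j, ℓ j (s / h) • gradient U (WithLp.toLp 2 (fun i => X (c j * h) (⟨0, by omega⟩, i))))
    (X Y Xt Yt : ℝ → EuclideanSpace ℝ (Fin K × Fin d))
    (hX : Continuous X) (hY : Continuous Y) (hXt : Continuous Xt) (hYt : Continuous Yt)
    (hXteq : ∀ t ∈ Set.Icc (0 : ℝ) h, Xt t =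
      y + (∫ s in (0 : ℝ)..t, Matrix.toEuclideanLin A (Xt s))
        - (∫ s in (0 : ℝ)..t, emb2 (P s X)) + W t)
    (hYteq : ∀ t ∈ Set.Icc (0 : ℝ) h, Yt t =
      y + (∫ s in (0 : ℝ)..t, Matrix.toEuclideanLin A (Yt s))
        - (∫ s in (0 : ℝ)..t, emb2 (P s Y)) + W t) :
    ∀ t ∈ Set.Icc (0 : ℝ) h,
      ‖Xt t - Yt t‖ ≤
        Real.exp (opNorm A * h) * L * Γφ * h * ⨆ s : Set.Icc (0 : ℝ) h, ‖X s - Y s‖ := by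
  set S := ⨆ s : Icc (0 : ℝ) h, ‖X s - Y s‖
  have hS (s : ℝ) (hs : s ∈ Icc 0 h) : ‖X s - Y s‖ ≤ S :=
    (hX.sub hY).norm.le_ciSup_of_isCompact isCompact_Icc hs
  have hℓ_cont (j : Fin M) : Continuous (ℓ j) := by rw [funext (hℓ j)]; fun_prop
  have hΓ (τ : ℝ) (hτ : τ ∈ Icc 0 1) : ∑ j, |ℓ j τ| ≤ Γφ := hΓφ ▸
    (continuous_finsetSum _ fun j _ => (hℓ_cont j).abs).le_ciSup_of_isCompact isCompact_Icc hτ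
  have hemb : emb2 = EuclideanSpace.blockEmbedding (𝕜 := ℝ) (⟨1, hK⟩ : Fin K) := by
    funext v; ext p; simp only [hemb2, EuclideanSpace.blockEmbedding_apply, Fin.ext_iff]
  have hP_cont (Z : ℝ → EuclideanSpace ℝ (Fin K × Fin d)) : Continuous fun s => emb2 (P s Z) := by
    simp only [hP, hemb]; fun_prop
  have hP_sub (s : ℝ) (hs : s ∈ Icc 0 h) : ‖emb2 (P s X) - emb2 (P s Y)‖ ≤ Γφ * (L * S) := by
    have hh : 0 ≤ h := hs.1.trans hs.2
    rw [hemb, ← map_sub, LinearIsometry.norm_map, hP, hP]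
    refine (norm_sum_smul_sub_sum_smul_le (C := L * S) _ _ _ _
      fun j _ => (hLip _ _).trans ?_).trans ?_
    · have hcj : c j * h ∈ Icc 0 h := ⟨mul_nonneg (hc j).1 hh, mul_le_of_le_one_left hh (hc j).2⟩
      exact mul_le_mul_of_nonneg_left
        ((EuclideanSpace.norm_block_le (X _ - Y _) _).trans (hS _ hcj)) hL.le
    · exact mul_le_mul_of_nonneg_right (hΓ _ ⟨div_nonneg hs.1 hh, div_le_one_of_le₀ hs.2 hh⟩)
        (mul_nonneg hL.le ((norm_nonneg _).trans (hS s hs)))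
  intro t ht
  calc ‖Xt t - Yt t‖ ≤ Real.exp (opNorm A * h) * (Γφ * (L * S)) * h :=
        norm_sub_le_of_eq_integral (T := LinearMap.toContinuousLinearMap (Matrix.toEuclideanLin A))
          hXt hYt (hP_cont X) (hP_cont Y) hXteq hYteq hP_sub t ht
    _ = Real.exp (opNorm A * h) * L * Γφ * h * S := by ring
end

section
/- Let n ≥ 1, let b : ℝ^n → ℝ^n be continuously differentiable with Jacobian J_b, let S ∈ ℝ^{n×n} be symmetric positive definite, and let C_S > 0 be such that S·J_b(x) + J_b(x)^T·S ⪯ −2C_S·S (i.e., −2C_S S − S J_b(x) − J_b(x)^T S is positive semidefinite) for every x ∈ ℝ^n. Suppose X, Y : [0,∞) → ℝ^n are differentiable and satisfy X'(t) − Y'(t) = b(X(t)) − b(Y(t)) for all t ≥ 0. Then for all t ≥ 0, (X(t) − Y(t))^T S (X(t) − Y(t)) ≤ e^{−2C_S t} · (X(0) − Y(0))^T S (X(0) − Y(0)). In particular, d/dt [(X(t) − Y(t))^T S (X(t) − Y(t))] ≤ −2C_S (X(t) − Y(t))^T S (X(t) − Y(t)). -/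
/-!
With `Z = X - Y` and `V = ⟪Z, S Z⟫`, symmetry of `S` gives `V' = 2 ⟪b X - b Y, S Z⟫`.
The mean value theorem along the segment from `Y` to `X` writes this as `2 ⟪J_b(ξ) Z, S Z⟫`
for some `ξ`, which the matrix inequality bounds by `-2 C_S V`; Grönwall's inequality then gives
`V t ≤ exp (-2 C_S t) V 0`.
-/

open Matrix Set
open scoped RealInnerProductSpace

lemma inner_toEuclideanLin_le_of_posSemidef {ι : Type*} [Fintype ι] [DecidableEq ι]
    {S J : Matrix ι ι ℝ} (hS : S.IsSymm) {c : ℝ}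
    (h : ((-(2 * c)) • S - (S * J + Jᵀ * S)).PosSemidef) (z : EuclideanSpace ℝ ι) :
    ⟪toEuclideanLin J z, toEuclideanLin S z⟫ ≤ -c * ⟪z, toEuclideanLin S z⟫ := by
  have hS_symm : (toEuclideanLin S).IsSymmetric :=
    isSymmetric_toEuclideanLin_iff.mpr (isHermitian_iff_isSymm.mpr hS)
  have hJ_adj : toEuclideanLin Jᵀ = (toEuclideanLin J).adjoint := by
    rw [← conjTranspose_eq_transpose_of_trivial, toEuclideanLin_conjTranspose_eq_adjoint]
  have hSJ : ⟪z, toEuclideanLin S (toEuclideanLin J z)⟫ =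
      ⟪toEuclideanLin J z, toEuclideanLin S z⟫ := by
    rw [← hS_symm, real_inner_comm]
  have hnonneg := (isPositive_toEuclideanLin_iff.mpr h).inner_nonneg_right z
  simp only [map_sub, map_smul, map_add, LinearMap.sub_apply, LinearMap.add_apply,
    LinearMap.smul_apply, toLpLin_mul_same, LinearMap.comp_apply, hJ_adj, inner_sub_right,
    inner_add_right, inner_smul_right, LinearMap.adjoint_inner_right] at hnonneg
  linarith

section

variable {E : Type*} [NormedAddCommGroup E] [InnerProductSpace ℝ E]

lemma inner_sub_le_of_inner_fderiv_le {b : E → E} (hb : Differentiable ℝ b) (T : E →ₗ[ℝ] E)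
    {c : ℝ} (h : ∀ x y, ⟪fderiv ℝ b x y, T y⟫ ≤ -c * ⟪y, T y⟫) (u v : E) :
    ⟪b u - b v, T (u - v)⟫ ≤ -c * ⟪u - v, T (u - v)⟫ := by
  set z := u - v
  have hg : ∀ s : ℝ, HasDerivAt (fun s : ℝ => ⟪b (v + s • z), T z⟫)
      (⟪fderiv ℝ b (v + s • z) z, T z⟫) s := by
    intro s
    have hline : HasDerivAt (fun s : ℝ => v + s • z) z s := by
      simpa using ((hasDerivAt_id s).smul_const z).const_add v
    simpa using ((hb _).hasFDerivAt.comp_hasDerivAt s hline).inner ℝ (hasDerivAt_const s (T z))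
  obtain ⟨ξ, -, hξ⟩ := exists_hasDerivAt_eq_slope _ _ zero_lt_one
    (fun s _ => (hg s).continuousAt.continuousWithinAt) (fun s _ => hg s)
  have hvz : v + z = u := add_sub_cancel v u
  have hslope := h (v + ξ • z) z
  rw [hξ] at hslope
  simp only [one_smul, zero_smul, add_zero, sub_zero, div_one] at hslope
  rw [inner_sub_left, ← hvz]
  linarith

lemma HasDerivWithinAt.inner_apply_self {T : E →L[ℝ] E} (hT : (T : E →ₗ[ℝ] E).IsSymmetric)
    {Z : ℝ → E} {z' : E} {s : Set ℝ} {t : ℝ} (hZ : HasDerivWithinAt Z z' s t) :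
    HasDerivWithinAt (fun τ => ⟪Z τ, T (Z τ)⟫) (2 * ⟪z', T (Z t)⟫) s t := by
  refine (hZ.inner ℝ (T.hasFDerivAt.comp_hasDerivWithinAt t hZ)).congr_deriv ?_
  have hsymm : ⟪T (Z t), z'⟫ = ⟪Z t, T z'⟫ := hT (Z t) z'
  rw [Function.comp_apply, two_mul, ← hsymm, real_inner_comm]

end

lemma le_exp_mul_of_hasDerivWithinAt_le {f f' : ℝ → ℝ} {K : ℝ}
    (hf : ∀ t, 0 ≤ t → HasDerivWithinAt f (f' t) (Ici 0) t)
    (bound : ∀ t, 0 ≤ t → f' t ≤ K * f t) (t : ℝ) (ht : 0 ≤ t) :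
    f t ≤ Real.exp (K * t) * f 0 := by
  have key := le_gronwallBound_of_liminf_deriv_right_le (f := f) (f' := f') (δ := f 0) (K := K)
    (ε := 0) (a := 0) (b := t)
    (fun x hx => (hf x hx.1).continuousWithinAt.mono Icc_subset_Ici_self)
    (fun x hx _ hr => ((hf x hx.1).mono (Ici_subset_Ici.mpr hx.1)).liminf_right_slope_le hr)
    le_rfl (fun x hx => by simpa using bound x hx.1) t ⟨ht, le_rfl⟩
  rwa [gronwallBound_ε0, sub_zero, mul_comm] at key

theorem stmt11_general (n : ℕ)
    (b : EuclideanSpace ℝ (Fin n) → EuclideanSpace ℝ (Fin n)) (hb : ContDiff ℝ 1 b)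
    -- `Jb x` is the Jacobian matrix of `b` at `x`
    (Jb : EuclideanSpace ℝ (Fin n) → Matrix (Fin n) (Fin n) ℝ)
    (hJb : ∀ x, Matrix.toEuclideanLin (Jb x) =
      (fderiv ℝ b x : EuclideanSpace ℝ (Fin n) →ₗ[ℝ] EuclideanSpace ℝ (Fin n)))
    (S : Matrix (Fin n) (Fin n) ℝ) (hSsym : S.IsSymm)
    (CS : ℝ)
    -- `S·Jb(x) + Jb(x)ᵀ·S ⪯ −2 C_S S` for all `x`
    (hcontr : ∀ x, ((-(2 * CS)) • S - (S * Jb x + (Jb x)ᵀ * S)).PosSemidef)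
    (X Y : ℝ → EuclideanSpace ℝ (Fin n))
    (dX dY : ℝ → EuclideanSpace ℝ (Fin n))
    (hX : ∀ t : ℝ, 0 ≤ t → HasDerivWithinAt X (dX t) (Set.Ici 0) t)
    (hY : ∀ t : ℝ, 0 ≤ t → HasDerivWithinAt Y (dY t) (Set.Ici 0) t)
    -- `X'(t) − Y'(t) = b(X(t)) − b(Y(t))`
    (hode : ∀ t : ℝ, 0 ≤ t → dX t - dY t = b (X t) - b (Y t)) :
    (∀ t : ℝ, 0 ≤ t →
      (inner ℝ (X t - Y t) (Matrix.toEuclideanLin S (X t - Y t)) : ℝ) ≤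
        Real.exp (-(2 * CS) * t) *
          (inner ℝ (X 0 - Y 0) (Matrix.toEuclideanLin S (X 0 - Y 0)) : ℝ)) ∧
    (∀ t : ℝ, 0 ≤ t →
      derivWithin
          (fun s => (inner ℝ (X s - Y s) (Matrix.toEuclideanLin S (X s - Y s)) : ℝ))
          (Set.Ici 0) t ≤
        -(2 * CS) * (inner ℝ (X t - Y t) (Matrix.toEuclideanLin S (X t - Y t)) : ℝ)) := by
  have hS : (toEuclideanLin S).IsSymmetric :=
    isSymmetric_toEuclideanLin_iff.mpr (isHermitian_iff_isSymm.mpr hSsym)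
  have hV : ∀ t, 0 ≤ t → HasDerivWithinAt (fun s => ⟪X s - Y s, toEuclideanLin S (X s - Y s)⟫)
      (2 * ⟪b (X t) - b (Y t), toEuclideanLin S (X t - Y t)⟫) (Ici 0) t := fun t ht =>
    (hode t ht ▸ (hX t ht).sub (hY t ht)).inner_apply_self
      (T := toEuclideanCLM (n := Fin n) (𝕜 := ℝ) S) hS
  have hbound : ∀ t, 2 * ⟪b (X t) - b (Y t), toEuclideanLin S (X t - Y t)⟫ ≤
      -(2 * CS) * ⟪X t - Y t, toEuclideanLin S (X t - Y t)⟫ := by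
    intro t
    have := inner_sub_le_of_inner_fderiv_le (hb.differentiable one_ne_zero) (toEuclideanLin S)
      (fun x y => hJb x ▸ inner_toEuclideanLin_le_of_posSemidef hSsym (hcontr x) y) (X t) (Y t)
    linarith
  refine ⟨fun t ht => ?_, fun t ht => ?_⟩
  · exact le_exp_mul_of_hasDerivWithinAt_le hV (fun t _ => hbound t) t ht
  · rw [(hV t ht).derivWithin (uniqueDiffOn_Ici 0 t ht)]
    exact hbound t

theorem stmt11 (n : ℕ) (hn : 1 ≤ n)
    (b : EuclideanSpace ℝ (Fin n) → EuclideanSpace ℝ (Fin n)) (hb : ContDiff ℝ 1 b)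
    -- `Jb x` is the Jacobian matrix of `b` at `x`
    (Jb : EuclideanSpace ℝ (Fin n) → Matrix (Fin n) (Fin n) ℝ)
    (hJb : ∀ x, Matrix.toEuclideanLin (Jb x) =
      (fderiv ℝ b x : EuclideanSpace ℝ (Fin n) →ₗ[ℝ] EuclideanSpace ℝ (Fin n)))
    (S : Matrix (Fin n) (Fin n) ℝ) (hSsym : S.IsSymm) (hSpos : S.PosDef)
    (CS : ℝ) (hCS : 0 < CS)
    -- `S·Jb(x) + Jb(x)ᵀ·S ⪯ −2 C_S S` for all `x`
    (hcontr : ∀ x, ((-(2 * CS)) • S - (S * Jb x + (Jb x)ᵀ * S)).PosSemidef)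
    (X Y : ℝ → EuclideanSpace ℝ (Fin n))
    (dX dY : ℝ → EuclideanSpace ℝ (Fin n))
    (hX : ∀ t : ℝ, 0 ≤ t → HasDerivWithinAt X (dX t) (Set.Ici 0) t)
    (hY : ∀ t : ℝ, 0 ≤ t → HasDerivWithinAt Y (dY t) (Set.Ici 0) t)
    -- `X'(t) − Y'(t) = b(X(t)) − b(Y(t))`
    (hode : ∀ t : ℝ, 0 ≤ t → dX t - dY t = b (X t) - b (Y t)) :
    (∀ t : ℝ, 0 ≤ t →
      (inner ℝ (X t - Y t) (Matrix.toEuclideanLin S (X t - Y t)) : ℝ) ≤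
        Real.exp (-(2 * CS) * t) *
          (inner ℝ (X 0 - Y 0) (Matrix.toEuclideanLin S (X 0 - Y 0)) : ℝ)) ∧
    (∀ t : ℝ, 0 ≤ t →
      derivWithin
          (fun s => (inner ℝ (X s - Y s) (Matrix.toEuclideanLin S (X s - Y s)) : ℝ))
          (Set.Ici 0) t ≤
        -(2 * CS) * (inner ℝ (X t - Y t) (Matrix.toEuclideanLin S (X t - Y t)) : ℝ)) :=
  stmt11_general n b hb Jb hJb S hSsym CS hcontr X Y dX dY hX hY hode
end

section
/- Let n ≥ 1, let S ∈ ℝ^{n×n} be symmetric positive definite with symmetric positive definite square root S^{1/2}, and let C_S > 0. Let h > 0, let J : [0,h] → ℝ^{n×n} be continuous with S·J(t) + J(t)^T·S ⪯ −2C_S·S for every t ∈ [0,h], and let v : [0,h] → ℝ^n be continuous. Suppose δ : [0,h] → ℝ^n is differentiable with δ(0) = 0 and δ'(t) = J(t)·δ(t) + v(t) for all t ∈ [0,h]. Then for every t ∈ [0,h], δ(t)^T S δ(t) ≤ (t/C_S) · sup_{s∈[0,t]} ‖S^{1/2} v(s)‖². -/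
/-!
The energy `E(t) = ⟪δ, S δ⟫ = ‖S^{1/2} δ‖²` vanishes at `0`, and along the flow
`E' = ⟪δ, (S J + Jᵀ S) δ⟫ + 2 ⟪S^{1/2} δ, S^{1/2} v⟫ ≤ -2 C_S ‖S^{1/2} δ‖² + 2 ‖S^{1/2} δ‖ ‖S^{1/2} v‖`,
which by AM-GM is at most `‖S^{1/2} v‖² / C_S`. Integrating this bound over `[0, t]` gives the
estimate.
-/

open Matrix Set

lemma neg_two_mul_sq_add_two_mul_le_sq_div {c : ℝ} (hc : 0 < c) (a b : ℝ) :
    -(2 * c) * a ^ 2 + 2 * (a * b) ≤ b ^ 2 / c := by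
  rw [le_div_iff₀ hc]
  nlinarith [sq_nonneg (c * a - b), sq_nonneg a]

section QuadraticForms

variable {ι : Type*} [Fintype ι] [DecidableEq ι]

lemma Matrix.IsSymm.isSymmetric_toEuclideanLin {A : Matrix ι ι ℝ} (hA : A.IsSymm) :
    A.toEuclideanLin.IsSymmetric :=
  isSymmetric_toEuclideanLin_iff.mpr (isHermitian_iff_isSymm.mpr hA)

lemma Matrix.inner_toEuclideanLin_transpose (A : Matrix ι ι ℝ) (x y : EuclideanSpace ℝ ι) :
    inner ℝ x (Aᵀ.toEuclideanLin y) = inner ℝ (A.toEuclideanLin x) y := by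
  rw [← conjTranspose_eq_transpose_of_trivial, toEuclideanLin_conjTranspose_eq_adjoint,
    LinearMap.adjoint_inner_right]

lemma Matrix.IsSymm.inner_toEuclideanLin_toEuclideanLin {A : Matrix ι ι ℝ} (hA : A.IsSymm)
    (x y : EuclideanSpace ℝ ι) :
    inner ℝ (A.toEuclideanLin x) (A.toEuclideanLin y) = inner ℝ x ((A * A).toEuclideanLin y) := by
  rw [hA.isSymmetric_toEuclideanLin, toLpLin_mul_same]
  rfl

lemma Matrix.IsSymm.inner_mul_toEuclideanLin_le {S J : Matrix ι ι ℝ} (hS : S.IsSymm) {c : ℝ}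
    (hSJ : ((-(2 * c)) • S - (S * J + Jᵀ * S)).PosSemidef) (x : EuclideanSpace ℝ ι) :
    inner ℝ x (S.toEuclideanLin (J.toEuclideanLin x)) ≤ -c * inner ℝ x (S.toEuclideanLin x) := by
  have hpos := (isPositive_toEuclideanLin_iff.mpr hSJ).2 x
  rw [RCLike.re_to_real, real_inner_comm] at hpos
  have hJS : inner ℝ x ((Jᵀ * S).toEuclideanLin x) =
      inner ℝ x (S.toEuclideanLin (J.toEuclideanLin x)) := by
    rw [toLpLin_mul_same, LinearMap.comp_apply, inner_toEuclideanLin_transpose, real_inner_comm,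
      hS.isSymmetric_toEuclideanLin]
  simp only [map_sub, map_smul, map_add, LinearMap.sub_apply, LinearMap.smul_apply,
    LinearMap.add_apply, inner_sub_right, real_inner_smul_right, inner_add_right, hJS] at hpos
  rw [toLpLin_mul_same, LinearMap.comp_apply] at hpos
  linarith

lemma Matrix.IsSymm.two_mul_inner_toEuclideanLin_add_le {S S12 J : Matrix ι ι ℝ}
    (hS : S.IsSymm) (hS12 : S12.IsSymm) (hsqrt : S12 * S12 = S) {c : ℝ} (hc : 0 < c)
    (hSJ : ((-(2 * c)) • S - (S * J + Jᵀ * S)).PosSemidef) (x w : EuclideanSpace ℝ ι) :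
    2 * inner ℝ (S12.toEuclideanLin x) (S12.toEuclideanLin (J.toEuclideanLin x + w)) ≤
      ‖S12.toEuclideanLin w‖ ^ 2 / c := by
  set T := S12.toEuclideanLin
  have hquad : inner ℝ (T x) (T (J.toEuclideanLin x)) ≤ -c * ‖T x‖ ^ 2 := by
    rw [← real_inner_self_eq_norm_sq, hS12.inner_toEuclideanLin_toEuclideanLin,
      hS12.inner_toEuclideanLin_toEuclideanLin, hsqrt]
    exact hS.inner_mul_toEuclideanLin_le hSJ x
  calc 2 * inner ℝ (T x) (T (J.toEuclideanLin x + w))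
      = 2 * inner ℝ (T x) (T (J.toEuclideanLin x)) + 2 * inner ℝ (T x) (T w) := by
        rw [map_add, inner_add_right, mul_add]
    _ ≤ -(2 * c) * ‖T x‖ ^ 2 + 2 * (‖T x‖ * ‖T w‖) := by
        linarith [real_inner_le_norm (T x) (T w)]
    _ ≤ ‖T w‖ ^ 2 / c := neg_two_mul_sq_add_two_mul_le_sq_div hc _ _

end QuadraticForms

lemma sub_le_mul_sub_of_hasDerivWithinAt_le {f f' : ℝ → ℝ} {a b K : ℝ}
    (hf : ∀ x ∈ Icc a b, HasDerivWithinAt f (f' x) (Icc a b) x)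
    (hbound : ∀ x ∈ Ico a b, f' x ≤ K) (hab : a ≤ b) : f b - f a ≤ K * (b - a) := by
  have key := image_le_of_deriv_right_le_deriv_boundary (B := fun x => f a + K * (x - a))
    (fun x hx => (hf x hx).continuousWithinAt)
    (fun x hx => (hf x (Ico_subset_Icc_self hx)).mono_of_mem_nhdsWithin (Icc_mem_nhdsGE_of_mem hx))
    (by simp) (by fun_prop)
    (fun x _ => ((hasDerivAt_id x).sub_const a |>.const_mul K |>.const_add (f a)).hasDerivWithinAt)
    (by simpa using hbound) (right_mem_Icc.mpr hab)
  linarith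

lemma IsCompact.le_ciSup_of_continuousOn {α : Type*} [TopologicalSpace α] {s : Set α}
    (hs : IsCompact s) {f : α → ℝ} (hf : ContinuousOn f s) {x : α} (hx : x ∈ s) :
    f x ≤ ⨆ y : s, f y :=
  le_ciSup (by simpa [image_eq_range] using hs.bddAbove_image hf) (⟨x, hx⟩ : s)

theorem stmt12_general (n : ℕ)
    (S S12 : Matrix (Fin n) (Fin n) ℝ)
    (hSsym : S.IsSymm)
    (hS12sym : S12.IsSymm)
    -- `S12` is the square root of `S`
    (hsqrt : S12 * S12 = S)
    (CS : ℝ) (hCS : 0 < CS) (h : ℝ)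
    (J : ℝ → Matrix (Fin n) (Fin n) ℝ)
    -- `S·J(t) + J(t)ᵀ·S ⪯ −2 C_S S` on `[0,h]`
    (hcontr : ∀ t ∈ Set.Icc (0 : ℝ) h,
      ((-(2 * CS)) • S - (S * J t + (J t)ᵀ * S)).PosSemidef)
    (v : ℝ → EuclideanSpace ℝ (Fin n)) (hv : ContinuousOn v (Set.Icc 0 h))
    (δ : ℝ → EuclideanSpace ℝ (Fin n)) (hδ0 : δ 0 = 0)
    -- `δ'(t) = J(t)·δ(t) + v(t)` on `[0,h]`
    (hδ : ∀ t ∈ Set.Icc (0 : ℝ) h,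
      HasDerivWithinAt δ (Matrix.toEuclideanLin (J t) (δ t) + v t) (Set.Icc 0 h) t) :
    ∀ t ∈ Set.Icc (0 : ℝ) h,
      (inner ℝ (δ t) (Matrix.toEuclideanLin S (δ t)) : ℝ) ≤
        (t / CS) * ⨆ s : Set.Icc (0 : ℝ) t, ‖Matrix.toEuclideanLin S12 (v s)‖ ^ 2 := by
  rintro t ⟨ht0, hth⟩
  set T := S12.toEuclideanLin
  have hsub : Icc 0 t ⊆ Icc 0 h := Icc_subset_Icc_right hth
  have hderiv : ∀ s ∈ Icc 0 t, HasDerivWithinAt (fun s => ‖T (δ s)‖ ^ 2)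
      (2 * inner ℝ (T (δ s)) (T ((J s).toEuclideanLin (δ s) + v s))) (Icc 0 t) s := fun s hs =>
    (T.toContinuousLinearMap.hasFDerivAt.comp_hasDerivWithinAt s
      ((hδ s (hsub hs)).mono hsub)).norm_sq
  have hvT : ContinuousOn (fun s => ‖T (v s)‖ ^ 2) (Icc 0 t) :=
    (T.continuous_of_finiteDimensional.comp_continuousOn (hv.mono hsub)).norm.pow 2
  have hbound : ∀ s ∈ Ico 0 t, 2 * inner ℝ (T (δ s)) (T ((J s).toEuclideanLin (δ s) + v s)) ≤
      (⨆ s : Icc (0 : ℝ) t, ‖T (v s)‖ ^ 2) / CS := fun s hs =>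
    (hSsym.two_mul_inner_toEuclideanLin_add_le hS12sym hsqrt hCS
      (hcontr s (hsub (Ico_subset_Icc_self hs))) _ _).trans
      (div_le_div_of_nonneg_right
        (isCompact_Icc.le_ciSup_of_continuousOn hvT (Ico_subset_Icc_self hs)) hCS.le)
  rw [← hsqrt, ← hS12sym.inner_toEuclideanLin_toEuclideanLin, real_inner_self_eq_norm_sq]
  calc ‖T (δ t)‖ ^ 2 = ‖T (δ t)‖ ^ 2 - ‖T (δ 0)‖ ^ 2 := by simp [hδ0]
    _ ≤ (⨆ s : Icc (0 : ℝ) t, ‖T (v s)‖ ^ 2) / CS * (t - 0) :=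
      sub_le_mul_sub_of_hasDerivWithinAt_le hderiv hbound ht0
    _ = t / CS * ⨆ s : Icc (0 : ℝ) t, ‖T (v s)‖ ^ 2 := by ring

theorem stmt12 (n : ℕ) (hn : 1 ≤ n)
    (S S12 : Matrix (Fin n) (Fin n) ℝ)
    (hSsym : S.IsSymm) (hSpos : S.PosDef)
    (hS12sym : S12.IsSymm) (hS12pos : S12.PosDef)
    -- `S12` is the square root of `S`
    (hsqrt : S12 * S12 = S)
    (CS : ℝ) (hCS : 0 < CS) (h : ℝ) (hh : 0 < h)
    (J : ℝ → Matrix (Fin n) (Fin n) ℝ)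
    (hJcont : ContinuousOn J (Set.Icc 0 h))
    -- `S·J(t) + J(t)ᵀ·S ⪯ −2 C_S S` on `[0,h]`
    (hcontr : ∀ t ∈ Set.Icc (0 : ℝ) h,
      ((-(2 * CS)) • S - (S * J t + (J t)ᵀ * S)).PosSemidef)
    (v : ℝ → EuclideanSpace ℝ (Fin n)) (hv : ContinuousOn v (Set.Icc 0 h))
    (δ : ℝ → EuclideanSpace ℝ (Fin n)) (hδ0 : δ 0 = 0)
    -- `δ'(t) = J(t)·δ(t) + v(t)` on `[0,h]`
    (hδ : ∀ t ∈ Set.Icc (0 : ℝ) h,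
      HasDerivWithinAt δ (Matrix.toEuclideanLin (J t) (δ t) + v t) (Set.Icc 0 h) t) :
    ∀ t ∈ Set.Icc (0 : ℝ) h,
      (inner ℝ (δ t) (Matrix.toEuclideanLin S (δ t)) : ℝ) ≤
        (t / CS) * ⨆ s : Set.Icc (0 : ℝ) t, ‖Matrix.toEuclideanLin S12 (v s)‖ ^ 2 :=
  stmt12_general n S S12 hSsym hS12sym hsqrt CS hCS h J hcontr v hv δ hδ0 hδ
end

section
/- Define a : ℕ × ℤ → ℕ by a(1, 2) = 1, a(1, j) = 0 for j ≠ 2, a(k, j) = 0 whenever j ≤ 1, and the recursion a(k+1, j) = a(k, j−1) + a(k, j+1) for all k ≥ 1 and j ≥ 2. Then for every k ≥ 2, the row sum satisfies ∑_{j=2}^{k+1} a(k, j) ≤ 2^{k−2}. Moreover, writing E_r := ∑_{s=1}^{r} a(2r, 2s+1) and O_r := ∑_{s=1}^{r+1} a(2r+1, 2s), one has O_r = 2·E_r and E_r ≤ 2·O_{r−1} for all r ≥ 1. -/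
theorem stmt17 (a : ℕ → ℤ → ℕ)
    (ha12 : a 1 2 = 1)
    (ha1 : ∀ j : ℤ, j ≠ 2 → a 1 j = 0)
    (ha0 : ∀ (k : ℕ) (j : ℤ), j ≤ 1 → a k j = 0)
    (harec : ∀ k : ℕ, 1 ≤ k → ∀ j : ℤ, 2 ≤ j → a (k + 1) j = a k (j - 1) + a k (j + 1)) :
    (∀ k : ℕ, 2 ≤ k → ∑ j ∈ Finset.Icc (2 : ℤ) ((k : ℤ) + 1), a k j ≤ 2 ^ (k - 2)) ∧
    (∀ r : ℕ, 1 ≤ r →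
      -- `O_r = 2·E_r`
      (∑ s ∈ Finset.Icc (1 : ℕ) (r + 1), a (2 * r + 1) (2 * (s : ℤ)) =
        2 * ∑ s ∈ Finset.Icc (1 : ℕ) r, a (2 * r) (2 * (s : ℤ) + 1)) ∧
      -- `E_r ≤ 2·O_{r−1}`
      (∑ s ∈ Finset.Icc (1 : ℕ) r, a (2 * r) (2 * (s : ℤ) + 1) ≤
        2 * ∑ s ∈ Finset.Icc (1 : ℕ) ((r - 1) + 1), a (2 * (r - 1) + 1) (2 * (s : ℤ)))) := by
  -- vanishing above the diagonal
  have hhigh : ∀ k : ℕ, 1 ≤ k → ∀ j : ℤ, (k : ℤ) + 1 < j → a k j = 0 := by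
    intro k hk
    induction k with
    | zero => omega
    | succ n ih =>
      intro j hj
      rcases Nat.eq_or_lt_of_le hk with h1 | h1
      · -- n + 1 = 1
        have hn : n = 0 := by omega
        subst hn
        exact ha1 j (by push_cast at hj; omega)
      · have hn : 1 ≤ n := by omega
        rw [harec n hn j (by push_cast at hj ⊢; omega)]
        rw [ih hn (j - 1) (by push_cast at hj ⊢; omega),
          ih hn (j + 1) (by push_cast at hj ⊢; omega)]
  -- the key row-sum inequality step
  have hstep : ∀ k : ℕ, 1 ≤ k →
      ∑ j ∈ Finset.Icc (2 : ℤ) ((k : ℤ) + 1 + 1), a (k + 1) j ≤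
        2 * ∑ j ∈ Finset.Icc (2 : ℤ) ((k : ℤ) + 1), a k j := by
    intro k hk
    have hrw : ∑ j ∈ Finset.Icc (2 : ℤ) ((k : ℤ) + 1 + 1), a (k + 1) j =
        (∑ j ∈ Finset.Icc (2 : ℤ) ((k : ℤ) + 2), a k (j - 1)) +
        ∑ j ∈ Finset.Icc (2 : ℤ) ((k : ℤ) + 2), a k (j + 1) := by
      rw [← Finset.sum_add_distrib]
      refine Finset.sum_congr (by ring_nf) ?_
      intro j hj
      rw [Finset.mem_Icc] at hj
      exact harec k hk j hj.1
    rw [hrw]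
    have h1 : ∑ j ∈ Finset.Icc (2 : ℤ) ((k : ℤ) + 2), a k (j - 1) =
        ∑ j ∈ Finset.Icc (1 : ℤ) ((k : ℤ) + 1), a k j := by
      rw [show Finset.Icc (2 : ℤ) ((k : ℤ) + 2) =
          Finset.map (addLeftEmbedding 1) (Finset.Icc (1 : ℤ) ((k : ℤ) + 1)) by
        rw [Finset.map_add_left_Icc]; congr 1 <;> omega]
      rw [Finset.sum_map]
      refine Finset.sum_congr rfl ?_
      intro j _
      congr 1
      simp only [addLeftEmbedding_apply]
      ring
    have h1' : ∑ j ∈ Finset.Icc (1 : ℤ) ((k : ℤ) + 1), a k j =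
        ∑ j ∈ Finset.Icc (2 : ℤ) ((k : ℤ) + 1), a k j := by
      symm
      refine Finset.sum_subset (Finset.Icc_subset_Icc_left (by norm_num)) ?_
      intro x hx hx'
      rw [Finset.mem_Icc] at hx
      rw [Finset.mem_Icc] at hx'
      exact ha0 k x (by omega)
    have h2 : ∑ j ∈ Finset.Icc (2 : ℤ) ((k : ℤ) + 2), a k (j + 1) =
        ∑ j ∈ Finset.Icc (3 : ℤ) ((k : ℤ) + 3), a k j := by
      rw [show Finset.Icc (3 : ℤ) ((k : ℤ) + 3) =
          Finset.map (addLeftEmbedding 1) (Finset.Icc (2 : ℤ) ((k : ℤ) + 2)) by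
        rw [Finset.map_add_left_Icc]; congr 1 <;> omega]
      rw [Finset.sum_map]
      refine Finset.sum_congr rfl ?_
      intro j _
      congr 1
      simp only [addLeftEmbedding_apply]
      ring
    have h2' : ∑ j ∈ Finset.Icc (3 : ℤ) ((k : ℤ) + 3), a k j =
        ∑ j ∈ Finset.Icc (3 : ℤ) ((k : ℤ) + 1), a k j := by
      symm
      refine Finset.sum_subset (Finset.Icc_subset_Icc_right (by omega)) ?_
      intro x hx hx'
      rw [Finset.mem_Icc] at hx
      rw [Finset.mem_Icc] at hx'
      exact hhigh k hk x (by omega)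
    have h2'' : ∑ j ∈ Finset.Icc (3 : ℤ) ((k : ℤ) + 1), a k j ≤
        ∑ j ∈ Finset.Icc (2 : ℤ) ((k : ℤ) + 1), a k j :=
      Finset.sum_le_sum_of_subset (Finset.Icc_subset_Icc_left (by norm_num))
    rw [h1, h1', h2, h2']
    omega
  constructor
  · -- row sums
    intro k hk
    induction k, hk using Nat.le_induction with
    | base =>
      have hset : Finset.Icc (2 : ℤ) ((2 : ℕ) + 1 : ℤ) = {2, 3} := by decide
      rw [show ((2 : ℕ) : ℤ) + 1 = ((2:ℕ) + 1 : ℤ) by norm_num, hset]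
      have e2 : a 2 2 = a 1 1 + a 1 3 := harec 1 le_rfl 2 (by norm_num)
      have e3 : a 2 3 = a 1 2 + a 1 4 := harec 1 le_rfl 3 (by norm_num)
      have z1 : a 1 1 = 0 := ha0 1 1 le_rfl
      have z3 : a 1 3 = 0 := ha1 3 (by norm_num)
      have z4 : a 1 4 = 0 := ha1 4 (by norm_num)
      simp [e2, e3, z1, z3, z4, ha12]
    | succ n hn ih =>
      have h := hstep n (by omega)
      have : ((n : ℤ) + 1) + 1 = ((n + 1 : ℕ) : ℤ) + 1 := by push_cast; ring
      rw [this] at h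
      calc ∑ j ∈ Finset.Icc (2 : ℤ) (((n + 1 : ℕ) : ℤ) + 1), a (n + 1) j
          ≤ 2 * ∑ j ∈ Finset.Icc (2 : ℤ) ((n : ℤ) + 1), a n j := h
        _ ≤ 2 * 2 ^ (n - 2) := by omega
        _ = 2 ^ (n + 1 - 2) := by
            rw [← pow_succ']
            congr 1
            omega
  · intro r hr
    constructor
    · -- O_r = 2 E_r
      have hrw : ∑ s ∈ Finset.Icc (1 : ℕ) (r + 1), a (2 * r + 1) (2 * (s : ℤ)) =
          (∑ s ∈ Finset.Icc (1 : ℕ) (r + 1), a (2 * r) (2 * (s : ℤ) - 1)) +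
          ∑ s ∈ Finset.Icc (1 : ℕ) (r + 1), a (2 * r) (2 * (s : ℤ) + 1) := by
        rw [← Finset.sum_add_distrib]
        refine Finset.sum_congr rfl ?_
        intro s hs
        rw [Finset.mem_Icc] at hs
        exact harec (2 * r) (by omega) _ (by push_cast; omega)
      have hA : ∑ s ∈ Finset.Icc (1 : ℕ) (r + 1), a (2 * r) (2 * (s : ℤ) - 1) =
          ∑ s ∈ Finset.Icc (1 : ℕ) r, a (2 * r) (2 * (s : ℤ) + 1) := by
        rw [show Finset.Icc (1 : ℕ) (r + 1) =
            Finset.map (addLeftEmbedding 1) (Finset.Icc (0 : ℕ) r) by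
          rw [Finset.map_add_left_Icc]; congr 1 <;> omega]
        rw [Finset.sum_map]
        have : ∀ s ∈ Finset.Icc (0 : ℕ) r,
            a (2 * r) (2 * ((addLeftEmbedding 1 s : ℕ) : ℤ) - 1) =
            a (2 * r) (2 * (s : ℤ) + 1) := by
          intro s _
          congr 1
          simp [addLeftEmbedding]
          push_cast
          ring
        rw [Finset.sum_congr rfl this]
        symm
        refine Finset.sum_subset (Finset.Icc_subset_Icc_left (by norm_num)) ?_
        intro s hs hs'
        rw [Finset.mem_Icc] at hs hs'
        have : s = 0 := by omega
        subst this
        exact ha0 _ _ (by norm_num)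
      have hB : ∑ s ∈ Finset.Icc (1 : ℕ) (r + 1), a (2 * r) (2 * (s : ℤ) + 1) =
          ∑ s ∈ Finset.Icc (1 : ℕ) r, a (2 * r) (2 * (s : ℤ) + 1) := by
        rw [Finset.sum_Icc_succ_top (by omega)]
        have : a (2 * r) (2 * ((r + 1 : ℕ) : ℤ) + 1) = 0 :=
          hhigh (2 * r) (by omega) _ (by push_cast; omega)
        rw [this, add_zero]
      rw [hrw, hA, hB]
      ring
    · -- E_r ≤ 2 O_{r-1}
      obtain ⟨m, rfl⟩ : ∃ m, r = m + 1 := ⟨r - 1, by omega⟩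
      have hm : (m + 1) - 1 = m := by omega
      rw [hm]
      have hrw : ∑ s ∈ Finset.Icc (1 : ℕ) (m + 1), a (2 * (m + 1)) (2 * (s : ℤ) + 1) =
          (∑ s ∈ Finset.Icc (1 : ℕ) (m + 1), a (2 * m + 1) (2 * (s : ℤ))) +
          ∑ s ∈ Finset.Icc (1 : ℕ) (m + 1), a (2 * m + 1) (2 * (s : ℤ) + 2) := by
        rw [← Finset.sum_add_distrib]
        refine Finset.sum_congr rfl ?_
        intro s hs
        rw [Finset.mem_Icc] at hs
        have h := harec (2 * m + 1) (by omega) (2 * (s : ℤ) + 1) (by push_cast; omega)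
        rw [show 2 * m + 1 + 1 = 2 * (m + 1) by ring] at h
        rw [h]
        congr 2
        ring
      rw [hrw]
      have hC : ∑ s ∈ Finset.Icc (1 : ℕ) (m + 1), a (2 * m + 1) (2 * (s : ℤ) + 2) ≤
          ∑ s ∈ Finset.Icc (1 : ℕ) (m + 1), a (2 * m + 1) (2 * (s : ℤ)) := by
        have hs1 : ∑ s ∈ Finset.Icc (1 : ℕ) (m + 1), a (2 * m + 1) (2 * (s : ℤ) + 2) =
            ∑ s ∈ Finset.Icc (2 : ℕ) (m + 2), a (2 * m + 1) (2 * (s : ℤ)) := by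
          rw [show Finset.Icc (2 : ℕ) (m + 2) =
              Finset.map (addLeftEmbedding 1) (Finset.Icc (1 : ℕ) (m + 1)) by
            rw [Finset.map_add_left_Icc]; congr 1 <;> omega]
          rw [Finset.sum_map]
          refine Finset.sum_congr rfl ?_
          intro s _
          congr 1
          simp [addLeftEmbedding]
          push_cast
          ring
        have hs2 : ∑ s ∈ Finset.Icc (2 : ℕ) (m + 2), a (2 * m + 1) (2 * (s : ℤ)) =
            ∑ s ∈ Finset.Icc (2 : ℕ) (m + 1), a (2 * m + 1) (2 * (s : ℤ)) := by
          rw [Finset.sum_Icc_succ_top (by omega)]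
          have : a (2 * m + 1) (2 * ((m + 2 : ℕ) : ℤ)) = 0 :=
            hhigh (2 * m + 1) (by omega) _ (by push_cast; omega)
          rw [this, add_zero]
        rw [hs1, hs2]
        exact Finset.sum_le_sum_of_subset (Finset.Icc_subset_Icc_left (by norm_num))
      omega
end
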